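/- For every real number r > 0, the set F(r) has a least element, and this minimum equals (3 + r²)(1 + r²)/r² when 0 < r ≤ √5 and equals 8(1 + r²)/r² when r ≥ √5. -/
import Mathlib


/-- The set `F(r)` of nonzero Laplace eigenvalues of the Berger sphere metric
`g_BS = f(σ₁² + σ₂²) + r²Vσ₃²` in `ℂℙ₂`. -/
noncomputable def FV (r : ℝ) : Set ℝ :=
  {x | ∃ n : ℕ, 1 ≤ n ∧ x = (1 + r ^ 2) / r ^ 2 * (2 * n + n ^ 2 * (1 + r ^ 2))} ∪
  {x | ∃ k : ℕ, Odd k ∧ 1 ≤ k ∧ x = (1 + r ^ 2) / r ^ 2 * (k * (k + 2) + r ^ 2)} ∪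
  {x | ∃ l : ℕ, Even l ∧ 2 ≤ l ∧ x = (1 + r ^ 2) / r ^ 2 * (l * (l + 2))}

theorem berger_cp2_first_eigenvalue (r : ℝ) (hr : 0 < r) :
    ∃ m : ℝ, IsLeast (FV r) m ∧
      (r ≤ Real.sqrt 5 → m = (3 + r ^ 2) * (1 + r ^ 2) / r ^ 2) ∧
      (Real.sqrt 5 ≤ r → m = 8 * (1 + r ^ 2) / r ^ 2) := by
  have hr2 : (0:ℝ) < r ^ 2 := by positivity
  have hC : (0:ℝ) ≤ (1 + r ^ 2) / r ^ 2 := by positivity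
  refine ⟨(1 + r ^ 2) / r ^ 2 * min (3 + r ^ 2) 8, ⟨?_, ?_⟩, ?_, ?_⟩
  · -- membership
    by_cases h : 3 + r ^ 2 ≤ 8
    · rw [min_eq_left h]
      left; right
      exact ⟨1, ⟨0, by ring⟩, le_refl 1, by push_cast; ring⟩
    · rw [min_eq_right (le_of_not_ge h)]
      right
      exact ⟨2, ⟨1, by ring⟩, le_refl 2, by norm_num⟩
  · -- lower bound
    rintro x ((⟨n, hn, rfl⟩ | ⟨k, -, hk, rfl⟩) | ⟨l, -, hl, rfl⟩)
    · have hn' : (1:ℝ) ≤ (n:ℝ) := by exact_mod_cast hn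
      refine mul_le_mul_of_nonneg_left ?_ hC
      refine le_trans (min_le_left _ _) ?_
      nlinarith [sq_nonneg r, sq_nonneg ((n:ℝ) - 1)]
    · have hk' : (1:ℝ) ≤ (k:ℝ) := by exact_mod_cast hk
      refine mul_le_mul_of_nonneg_left ?_ hC
      refine le_trans (min_le_left _ _) ?_
      nlinarith
    · have hl' : (2:ℝ) ≤ (l:ℝ) := by exact_mod_cast hl
      refine mul_le_mul_of_nonneg_left ?_ hC
      refine le_trans (min_le_right _ _) ?_
      nlinarith
  · intro h
    have h5 : r ^ 2 ≤ 5 := by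
      have := Real.sq_sqrt (by norm_num : (5:ℝ) ≥ 0)
      nlinarith [Real.sqrt_nonneg 5]
    rw [min_eq_left (by linarith)]
    ring
  · intro h
    have h5 : 5 ≤ r ^ 2 := by
      have := Real.sq_sqrt (by norm_num : (5:ℝ) ≥ 0)
      nlinarith [Real.sqrt_nonneg 5]
    rw [min_eq_right (by linarith)]
    ring
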